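/- Unbiasedness of SURE via Stein's lemma: for each i, E[f(X_{i1}, X_{i2}, θ_{i1}; t)] = 0, where f(x1, x2, μ; t) = A(x1,x2) − σ1^2 B(x1,x2) − C(x1,x2)^2 − (x1 − μ) C(x1,x2), with C(x1,x2) = Σ_j (t_{j1} − x1) p(x1,x2; t_{j1}, t_{j2}) / (ρ + Σ_j p(x1,x2; t_{j1}, t_{j2})), A(x1,x2) = Σ_j (t_{j1} − x1)^2 p(x1,x2; t_{j1}, t_{j2}) / (ρ + Σ_j p), and B(x1,x2) = Σ_j p / (ρ + Σ_j p). -/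

import Mathlib

open MeasureTheory Real

/-- Standard normal density. -/
noncomputable def gphi (x : ℝ) : ℝ := (Real.sqrt (2 * Real.pi))⁻¹ * Real.exp (-x ^ 2 / 2)

/-- Joint density of two independent normals with means `(t1, t2)` and
standard deviations `(σ1, σ2)`. -/
noncomputable def pdens (σ1 σ2 t1 t2 x1 x2 : ℝ) : ℝ :=
  gphi ((x1 - t1) / σ1) * gphi ((x2 - t2) / σ2) / (σ1 * σ2)

/-- `A(x1,x2)`: regularized posterior second moment. -/
noncomputable def termA (n : ℕ) (σ1 σ2 ρ : ℝ) (t : Fin n → Fin 2 → ℝ) (x1 x2 : ℝ) : ℝ :=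
  (∑ j : Fin n, (t j 0 - x1) ^ 2 * pdens σ1 σ2 (t j 0) (t j 1) x1 x2) /
  (ρ + ∑ j : Fin n, pdens σ1 σ2 (t j 0) (t j 1) x1 x2)

/-- `B(x1,x2)`: regularized mass ratio. -/
noncomputable def termB (n : ℕ) (σ1 σ2 ρ : ℝ) (t : Fin n → Fin 2 → ℝ) (x1 x2 : ℝ) : ℝ :=
  (∑ j : Fin n, pdens σ1 σ2 (t j 0) (t j 1) x1 x2) /
  (ρ + ∑ j : Fin n, pdens σ1 σ2 (t j 0) (t j 1) x1 x2)

/-- `C(x1,x2)`: regularized posterior first moment. -/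
noncomputable def termC (n : ℕ) (σ1 σ2 ρ : ℝ) (t : Fin n → Fin 2 → ℝ) (x1 x2 : ℝ) : ℝ :=
  (∑ j : Fin n, (t j 0 - x1) * pdens σ1 σ2 (t j 0) (t j 1) x1 x2) /
  (ρ + ∑ j : Fin n, pdens σ1 σ2 (t j 0) (t j 1) x1 x2)

/-!
Fix `x2` and regard `C` as a function of `x1`. Since `∂p_j/∂x1 = (t_j1 - x1) p_j / σ1²`, the
quotient rule gives `σ1² ∂C/∂x1 = A - σ1² B - C²`, so the integrand in `x1` is
`(σ1² C' - (x1 - μ1) C) φ`, with `φ` the `N(μ1, σ1²)` density. Its integral vanishes by Stein's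
identity, since `C` is bounded (by `n / (σ2 ρ)`). The whole integrand is dominated by
`(a + b |x1 - μ1|)` times the product Gaussian density, so Fubini integrates out `x2`.
-/

/-- The density of `N(μ, σ²)`; unlike Mathlib's `gaussianPDFReal`, it is parametrized by the
standard deviation. -/
noncomputable def normalPDF (μ σ x : ℝ) : ℝ := gphi ((x - μ) / σ) / σ

lemma normalPDF_eq (μ σ x : ℝ) :
    normalPDF μ σ x = (√(2 * π) * σ)⁻¹ * exp (-(2 * σ ^ 2)⁻¹ * (x - μ) ^ 2) := by
  unfold normalPDF gphi
  rw [div_pow, mul_inv]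
  ring_nf

lemma normalPDF_pos {σ : ℝ} (hσ : 0 < σ) (μ x : ℝ) : 0 < normalPDF μ σ x := by
  rw [normalPDF_eq]; positivity

lemma hasDerivAt_normalPDF (μ σ x : ℝ) :
    HasDerivAt (normalPDF μ σ) ((μ - x) / σ ^ 2 * normalPDF μ σ x) x := by
  rw [show normalPDF μ σ = _ from funext (normalPDF_eq μ σ)]
  exact ((((hasDerivAt_id x).sub_const μ).pow 2).const_mul _).exp.const_mul _
    |>.congr_deriv (by simp; ring)

lemma integrable_normalPDF {σ : ℝ} (hσ : 0 < σ) (μ : ℝ) : Integrable (normalPDF μ σ) := by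
  rw [show normalPDF μ σ = _ from funext (normalPDF_eq μ σ)]
  exact ((integrable_exp_neg_mul_sq (by positivity)).comp_sub_right μ).const_mul _

lemma integrable_sub_mul_normalPDF {σ : ℝ} (hσ : 0 < σ) (μ : ℝ) :
    Integrable fun x => (x - μ) * normalPDF μ σ x := by
  simp_rw [normalPDF_eq, mul_left_comm (_ - μ)]
  exact ((integrable_mul_exp_neg_mul_sq (by positivity)).comp_sub_right μ).const_mul _

lemma integrable_affine_mul_normalPDF {σ : ℝ} (hσ : 0 < σ) (μ a b : ℝ) :
    Integrable fun x => (a + b * |x - μ|) * normalPDF μ σ x := by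
  have habs : Integrable fun x => |x - μ| * normalPDF μ σ x :=
    (integrable_sub_mul_normalPDF hσ μ).norm.congr (ae_of_all _ fun x => by
      simp [abs_of_pos (normalPDF_pos hσ μ x)])
  refine (((integrable_normalPDF hσ μ).const_mul a).add (habs.const_mul b)).congr
    (ae_of_all _ fun x => ?_)
  simp only [Pi.add_apply]
  ring

lemma integrable_mul_normalPDF_of_abs_le {f : ℝ → ℝ} {σ μ a b : ℝ} (hσ : 0 < σ)
    (hf : AEStronglyMeasurable f) (hb : ∀ x, |f x| ≤ a + b * |x - μ|) :
    Integrable fun x => f x * normalPDF μ σ x :=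
  (integrable_affine_mul_normalPDF hσ μ a b).mono' (hf.mul (integrable_normalPDF hσ μ).1)
    (ae_of_all _ fun x => by
      rw [norm_mul, Real.norm_eq_abs, Real.norm_of_nonneg (normalPDF_pos hσ μ x).le]
      exact mul_le_mul_of_nonneg_right (hb x) (normalPDF_pos hσ μ x).le)

lemma mul_gphi_le_one {c u : ℝ} (hc : c ≤ 1 + u ^ 2 / 2) : c * gphi u ≤ 1 := by
  have hsqrt : 1 ≤ √(2 * π) := Real.one_le_sqrt.2 (by nlinarith [pi_gt_three])
  have hgphi : gphi u ≤ exp (-u ^ 2 / 2) := by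
    unfold gphi
    exact mul_le_of_le_one_left (exp_pos _).le (inv_le_one_of_one_le₀ hsqrt)
  have hgphi0 : 0 ≤ gphi u := by unfold gphi; positivity
  calc c * gphi u ≤ exp (u ^ 2 / 2) * exp (-u ^ 2 / 2) := by
        gcongr
        · exact hc.trans (by linarith [add_one_le_exp (u ^ 2 / 2)])
    _ = 1 := by rw [← exp_add]; simp [neg_div]

lemma normalPDF_le {σ : ℝ} (hσ : 0 < σ) (μ x : ℝ) : normalPDF μ σ x ≤ σ⁻¹ := by
  rw [normalPDF, div_eq_mul_inv]
  have h := mul_gphi_le_one (c := 1) (u := (x - μ) / σ) (by linarith [sq_nonneg ((x - μ) / σ)])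
  rw [one_mul] at h
  exact mul_le_of_le_one_left (inv_pos.2 hσ).le h

lemma abs_sub_mul_normalPDF_le {σ : ℝ} (hσ : 0 < σ) (μ x : ℝ) :
    |x - μ| * normalPDF μ σ x ≤ 1 := by
  set u := (x - μ) / σ
  have hu : |x - μ| * normalPDF μ σ x = |u| * gphi u := by
    rw [normalPDF, abs_div, abs_of_pos hσ]; ring
  rw [hu]
  exact mul_gphi_le_one (by nlinarith [sq_abs u, sq_nonneg (|u| - 1)])

lemma sq_sub_mul_normalPDF_le {σ : ℝ} (hσ : 0 < σ) (μ x : ℝ) :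
    (x - μ) ^ 2 * normalPDF μ σ x ≤ 2 * σ := by
  have hu : (x - μ) ^ 2 * normalPDF μ σ x =
      2 * σ * (((x - μ) / σ) ^ 2 / 2 * gphi ((x - μ) / σ)) := by
    rw [normalPDF, div_pow]; field_simp
  rw [hu]
  exact mul_le_of_le_one_right (by positivity) (mul_gphi_le_one (by linarith))

/-- The integrand is the derivative of `σ² g φ`, which is integrable because `g` is bounded. -/
theorem integral_stein_eq_zero {g g' : ℝ → ℝ} {μ σ K : ℝ} (hσ : 0 < σ)
    (hg : ∀ x, HasDerivAt g (g' x) x) (hgK : ∀ x, |g x| ≤ K)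
    (hint : Integrable fun x => (σ ^ 2 * g' x - (x - μ) * g x) * normalPDF μ σ x) :
    ∫ x, (σ ^ 2 * g' x - (x - μ) * g x) * normalPDF μ σ x = 0 := by
  have hgφ : Integrable fun x => σ ^ 2 * (g x * normalPDF μ σ x) :=
    ((integrable_normalPDF hσ μ).bdd_mul
      (continuous_iff_continuousAt.2 fun x => (hg x).continuousAt).aestronglyMeasurable
      (ae_of_all _ hgK)).const_mul _
  refine integral_eq_zero_of_hasDerivAt_of_integrable (fun x => ?_) hint hgφ
  refine (((hg x).mul (hasDerivAt_normalPDF μ σ x)).const_mul _).congr_deriv ?_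
  field_simp
  ring

lemma pdens_eq_mul_normalPDF (σ1 σ2 t1 t2 x1 x2 : ℝ) :
    pdens σ1 σ2 t1 t2 x1 x2 = normalPDF t1 σ1 x1 * normalPDF t2 σ2 x2 :=
  mul_div_mul_comm _ _ _ _

lemma abs_div_add_le {a s K ρ : ℝ} (hρ : 0 < ρ) (hs : 0 ≤ s) (ha : |a| ≤ K) :
    |a / (ρ + s)| ≤ K / ρ := by
  rw [abs_div, abs_of_pos (by linarith : 0 < ρ + s)]
  exact div_le_div₀ ((abs_nonneg a).trans ha) ha hρ (by linarith)

section Bounds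

variable {σ1 σ2 : ℝ} (hσ1 : 0 < σ1) (hσ2 : 0 < σ2)
include hσ1 hσ2

lemma pdens_pos (t1 t2 x1 x2 : ℝ) : 0 < pdens σ1 σ2 t1 t2 x1 x2 := by
  rw [pdens_eq_mul_normalPDF]
  exact mul_pos (normalPDF_pos hσ1 _ _) (normalPDF_pos hσ2 _ _)

lemma abs_sub_mul_pdens_le (t1 t2 x1 x2 : ℝ) :
    |t1 - x1| * pdens σ1 σ2 t1 t2 x1 x2 ≤ σ2⁻¹ := by
  rw [pdens_eq_mul_normalPDF, ← mul_assoc, abs_sub_comm, ← one_mul σ2⁻¹]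
  exact mul_le_mul (abs_sub_mul_normalPDF_le hσ1 t1 x1) (normalPDF_le hσ2 t2 x2)
    (normalPDF_pos hσ2 _ _).le zero_le_one

lemma sq_sub_mul_pdens_le (t1 t2 x1 x2 : ℝ) :
    (t1 - x1) ^ 2 * pdens σ1 σ2 t1 t2 x1 x2 ≤ 2 * σ1 * σ2⁻¹ := by
  rw [pdens_eq_mul_normalPDF, ← mul_assoc, ← neg_sub, neg_sq]
  exact mul_le_mul (sq_sub_mul_normalPDF_le hσ1 t1 x1) (normalPDF_le hσ2 t2 x2)
    (normalPDF_pos hσ2 _ _).le (by positivity)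

variable {n : ℕ} (t : Fin n → Fin 2 → ℝ)

lemma sum_pdens_nonneg (x1 x2 : ℝ) : 0 ≤ ∑ j, pdens σ1 σ2 (t j 0) (t j 1) x1 x2 :=
  Finset.sum_nonneg fun _ _ => (pdens_pos hσ1 hσ2 _ _ _ _).le

variable {ρ : ℝ} (hρ : 0 < ρ)
include hρ

lemma abs_termA_le (x1 x2 : ℝ) :
    |termA n σ1 σ2 ρ t x1 x2| ≤ n * (2 * σ1 * σ2⁻¹) / ρ := by
  refine abs_div_add_le hρ (sum_pdens_nonneg hσ1 hσ2 t x1 x2) ?_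
  rw [abs_of_nonneg (Finset.sum_nonneg fun _ _ =>
    mul_nonneg (sq_nonneg _) (pdens_pos hσ1 hσ2 _ _ _ _).le)]
  simpa using Finset.sum_le_card_nsmul Finset.univ _ _ fun j _ =>
    sq_sub_mul_pdens_le hσ1 hσ2 (t j 0) (t j 1) x1 x2

lemma abs_termB_le (x1 x2 : ℝ) : |termB n σ1 σ2 ρ t x1 x2| ≤ 1 := by
  have hS := sum_pdens_nonneg hσ1 hσ2 t x1 x2
  rw [termB, abs_of_nonneg (by positivity), div_le_one (by positivity)]
  linarith

lemma abs_termC_le (x1 x2 : ℝ) : |termC n σ1 σ2 ρ t x1 x2| ≤ n * σ2⁻¹ / ρ := by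
  refine abs_div_add_le hρ (sum_pdens_nonneg hσ1 hσ2 t x1 x2) ?_
  refine (Finset.abs_sum_le_sum_abs _ _).trans ?_
  simpa [abs_mul, abs_of_pos (pdens_pos hσ1 hσ2 _ _ _ _)] using
    Finset.sum_le_card_nsmul Finset.univ _ _ fun j _ =>
      abs_sub_mul_pdens_le hσ1 hσ2 (t j 0) (t j 1) x1 x2

end Bounds

/-- The paper's `f(x1, x2, μ; t)`. -/
noncomputable def sureIntegrand (n : ℕ) (σ1 σ2 ρ : ℝ) (t : Fin n → Fin 2 → ℝ) (μ x1 x2 : ℝ) : ℝ :=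
  termA n σ1 σ2 ρ t x1 x2 - σ1 ^ 2 * termB n σ1 σ2 ρ t x1 x2 - termC n σ1 σ2 ρ t x1 x2 ^ 2 -
    (x1 - μ) * termC n σ1 σ2 ρ t x1 x2

section Derivatives

variable {n : ℕ} {σ1 σ2 : ℝ} (t : Fin n → Fin 2 → ℝ) (x1 x2 : ℝ)

lemma hasDerivAt_pdens_fst (t1 t2 : ℝ) :
    HasDerivAt (fun y => pdens σ1 σ2 t1 t2 y x2)
      ((t1 - x1) / σ1 ^ 2 * pdens σ1 σ2 t1 t2 x1 x2) x1 := by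
  simp_rw [pdens_eq_mul_normalPDF, ← mul_assoc]
  exact (hasDerivAt_normalPDF t1 σ1 x1).mul_const _

lemma hasDerivAt_sum_pdens :
    HasDerivAt (fun y => ∑ j, pdens σ1 σ2 (t j 0) (t j 1) y x2)
      ((∑ j, (t j 0 - x1) * pdens σ1 σ2 (t j 0) (t j 1) x1 x2) / σ1 ^ 2) x1 := by
  refine (HasDerivAt.fun_sum fun j _ =>
    hasDerivAt_pdens_fst x1 x2 (t j 0) (t j 1)).congr_deriv ?_
  rw [Finset.sum_div]
  exact Finset.sum_congr rfl fun j _ => by ring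

lemma hasDerivAt_sum_sub_mul_pdens :
    HasDerivAt (fun y => ∑ j, (t j 0 - y) * pdens σ1 σ2 (t j 0) (t j 1) y x2)
      ((∑ j, (t j 0 - x1) ^ 2 * pdens σ1 σ2 (t j 0) (t j 1) x1 x2) / σ1 ^ 2 -
        ∑ j, pdens σ1 σ2 (t j 0) (t j 1) x1 x2) x1 := by
  refine (HasDerivAt.fun_sum fun j _ => ((hasDerivAt_id x1).const_sub (t j 0)).mul
    (hasDerivAt_pdens_fst x1 x2 (t j 0) (t j 1))).congr_deriv ?_
  rw [Finset.sum_div, ← Finset.sum_sub_distrib]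
  exact Finset.sum_congr rfl fun j _ => by simp only [id]; ring

lemma hasDerivAt_termC {ρ : ℝ} (hσ1 : σ1 ≠ 0)
    (hden : ρ + ∑ j, pdens σ1 σ2 (t j 0) (t j 1) x1 x2 ≠ 0) :
    HasDerivAt (fun y => termC n σ1 σ2 ρ t y x2)
      ((termA n σ1 σ2 ρ t x1 x2 - σ1 ^ 2 * termB n σ1 σ2 ρ t x1 x2 -
        termC n σ1 σ2 ρ t x1 x2 ^ 2) / σ1 ^ 2) x1 := by
  refine ((hasDerivAt_sum_sub_mul_pdens t x1 x2).div
    ((hasDerivAt_sum_pdens t x1 x2).const_add ρ) hden).congr_deriv ?_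
  unfold termA termB termC
  field_simp

end Derivatives

lemma measurable_sureIntegrand (n : ℕ) (σ1 σ2 ρ : ℝ) (t : Fin n → Fin 2 → ℝ) (μ : ℝ) :
    Measurable (Function.uncurry (sureIntegrand n σ1 σ2 ρ t μ)) := by
  unfold sureIntegrand termA termB termC pdens gphi
  fun_prop

section Integrals

variable {n : ℕ} {σ1 σ2 ρ : ℝ} (hσ1 : 0 < σ1) (hσ2 : 0 < σ2) (hρ : 0 < ρ)
  (t : Fin n → Fin 2 → ℝ) (μ : ℝ)
include hσ1 hσ2 hρ

lemma exists_abs_sureIntegrand_le :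
    ∃ a b : ℝ, ∀ x1 x2, |sureIntegrand n σ1 σ2 ρ t μ x1 x2| ≤ a + b * |x1 - μ| := by
  refine ⟨n * (2 * σ1 * σ2⁻¹) / ρ + σ1 ^ 2 + (n * σ2⁻¹ / ρ) ^ 2, n * σ2⁻¹ / ρ,
    fun x1 x2 => ?_⟩
  have hA := abs_termA_le hσ1 hσ2 t hρ x1 x2
  have hB := abs_termB_le hσ1 hσ2 t hρ x1 x2
  have hC := abs_termC_le hσ1 hσ2 t hρ x1 x2
  set A := termA n σ1 σ2 ρ t x1 x2
  set B := termB n σ1 σ2 ρ t x1 x2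
  set C := termC n σ1 σ2 ρ t x1 x2
  calc |A - σ1 ^ 2 * B - C ^ 2 - (x1 - μ) * C|
      ≤ |A| + |σ1 ^ 2 * B| + |C ^ 2| + |(x1 - μ) * C| := by
        linarith [abs_sub (A - σ1 ^ 2 * B - C ^ 2) ((x1 - μ) * C),
          abs_sub (A - σ1 ^ 2 * B) (C ^ 2), abs_sub A (σ1 ^ 2 * B)]
    _ = |A| + σ1 ^ 2 * |B| + |C| ^ 2 + |x1 - μ| * |C| := by
        rw [abs_mul, abs_mul, abs_pow, abs_pow, abs_of_pos hσ1]
    _ ≤ _ := by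
        have := mul_le_of_le_one_right (sq_nonneg σ1) hB
        have := pow_le_pow_left₀ (abs_nonneg C) hC 2
        have := mul_le_mul_of_nonneg_left hC (abs_nonneg (x1 - μ))
        linarith

lemma integral_sureIntegrand_mul_normalPDF (x2 : ℝ) :
    ∫ x1, sureIntegrand n σ1 σ2 ρ t μ x1 x2 * normalPDF μ σ1 x1 = 0 := by
  obtain ⟨a, b, hab⟩ := exists_abs_sureIntegrand_le hσ1 hσ2 hρ t μ
  have hint := integrable_mul_normalPDF_of_abs_le hσ1
    (measurable_sureIntegrand n σ1 σ2 ρ t μ).of_uncurry_right.aestronglyMeasurable (hab · x2)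
  have hsure : ∀ x1, sureIntegrand n σ1 σ2 ρ t μ x1 x2 =
      σ1 ^ 2 * ((termA n σ1 σ2 ρ t x1 x2 - σ1 ^ 2 * termB n σ1 σ2 ρ t x1 x2 -
        termC n σ1 σ2 ρ t x1 x2 ^ 2) / σ1 ^ 2) - (x1 - μ) * termC n σ1 σ2 ρ t x1 x2 := by
    intro x1
    rw [sureIntegrand, mul_div_cancel₀ _ (by positivity)]
  simp_rw [hsure] at hint ⊢
  refine integral_stein_eq_zero hσ1 (fun x1 => hasDerivAt_termC t x1 x2 hσ1.ne' ?_)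
    (abs_termC_le hσ1 hσ2 t hρ · x2) hint
  linarith [sum_pdens_nonneg hσ1 hσ2 t x1 x2]

lemma integrable_sureIntegrand_mul_pdens (μ2 : ℝ) :
    Integrable
      (fun x : ℝ × ℝ => sureIntegrand n σ1 σ2 ρ t μ x.1 x.2 * pdens σ1 σ2 μ μ2 x.1 x.2)
      (volume.prod volume) := by
  obtain ⟨a, b, hab⟩ := exists_abs_sureIntegrand_le hσ1 hσ2 hρ t μ
  have hmeas : Measurable fun x : ℝ × ℝ => pdens σ1 σ2 μ μ2 x.1 x.2 := by
    unfold pdens gphi; fun_prop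
  refine ((integrable_affine_mul_normalPDF hσ1 μ a b).mul_prod
    (integrable_normalPDF hσ2 μ2)).mono'
    ((measurable_sureIntegrand n σ1 σ2 ρ t μ).mul hmeas).aestronglyMeasurable
    (ae_of_all _ fun x => ?_)
  rw [norm_mul, Real.norm_eq_abs, Real.norm_of_nonneg (pdens_pos hσ1 hσ2 _ _ _ _).le,
    pdens_eq_mul_normalPDF, ← mul_assoc]
  gcongr
  · exact (normalPDF_pos hσ2 _ _).le
  · exact (normalPDF_pos hσ1 _ _).le
  · exact hab x.1 x.2

end Integrals

/-- Unbiasedness of SURE via Stein's lemma: for `(X_{i1}, X_{i2})` independent normals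
with means `(μ1, μ2)` and variances `(σ1², σ2²)`,
`E[A − σ1² B − C² − (X_{i1} − μ1) C] = 0`. -/
theorem stmt6 (n : ℕ) (σ1 σ2 ρ μ1 μ2 : ℝ) (hσ1 : 0 < σ1) (hσ2 : 0 < σ2) (hρ : 0 < ρ)
    (t : Fin n → Fin 2 → ℝ) :
    ∫ x : ℝ × ℝ,
      (termA n σ1 σ2 ρ t x.1 x.2 - σ1 ^ 2 * termB n σ1 σ2 ρ t x.1 x.2 -
        (termC n σ1 σ2 ρ t x.1 x.2) ^ 2 - (x.1 - μ1) * termC n σ1 σ2 ρ t x.1 x.2) *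
        pdens σ1 σ2 μ1 μ2 x.1 x.2 = 0 := by
  change ∫ x : ℝ × ℝ, sureIntegrand n σ1 σ2 ρ t μ1 x.1 x.2 * pdens σ1 σ2 μ1 μ2 x.1 x.2 = 0
  rw [Measure.volume_eq_prod,
    integral_prod_symm _ (integrable_sureIntegrand_mul_pdens hσ1 hσ2 hρ t μ1 μ2)]
  simp_rw [pdens_eq_mul_normalPDF, ← mul_assoc, integral_mul_const,
    integral_sureIntegrand_mul_normalPDF hσ1 hσ2 hρ, zero_mul, integral_zero]
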